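/- arXiv:2403.13927 — 3 statements merged into one kernel-verified Lean document; each statement's English description precedes it below -/
import Mathlib

section
/- Given vectors t, D ∈ ℝ³ such that ‖t + Dw‖₂ ≤ 1 for all w ∈ ℝ³ with ‖w‖₂ ≤ 1 (where Dw denotes componentwise multiplication), if (1/3)(‖t‖₂² + ‖D‖₂²) = 1 then t = 0 and D_i² = 1 for each component i. -/
set_option maxHeartbeats 1000000


/-- Given `t, D ∈ ℝ³` such that `‖t + Dw‖₂ ≤ 1` for all `w` with `‖w‖₂ ≤ 1`
(componentwise product `Dw`), if `(1/3)(‖t‖₂² + ‖D‖₂²) = 1` then `t = 0` and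
`D_i² = 1` for each component `i`. -/
theorem stmt_1 (t D : Fin 3 → ℝ)
    (hchan : ∀ w : Fin 3 → ℝ, (∑ i, (w i) ^ 2) ≤ 1 →
      (∑ i, (t i + D i * w i) ^ 2) ≤ 1)
    (heq : (1 / 3 : ℝ) * ((∑ i, (t i) ^ 2) + ∑ i, (D i) ^ 2) = 1) :
    (∀ i, t i = 0) ∧ (∀ i, (D i) ^ 2 = 1) := by
  have h0p := hchan ![1,0,0] (by norm_num [Fin.sum_univ_three, Matrix.cons_val_two, Matrix.tail_cons, Matrix.head_cons])
  have h0m := hchan ![-1,0,0] (by norm_num [Fin.sum_univ_three, Matrix.cons_val_two, Matrix.tail_cons, Matrix.head_cons])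
  have h1p := hchan ![0,1,0] (by norm_num [Fin.sum_univ_three, Matrix.cons_val_two, Matrix.tail_cons, Matrix.head_cons])
  have h1m := hchan ![0,-1,0] (by norm_num [Fin.sum_univ_three, Matrix.cons_val_two, Matrix.tail_cons, Matrix.head_cons])
  have h2p := hchan ![0,0,1] (by norm_num [Fin.sum_univ_three, Matrix.cons_val_two, Matrix.tail_cons, Matrix.head_cons])
  have h2m := hchan ![0,0,-1] (by norm_num [Fin.sum_univ_three, Matrix.cons_val_two, Matrix.tail_cons, Matrix.head_cons])
  simp only [Fin.sum_univ_three, Matrix.cons_val_zero, Matrix.cons_val_one,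
    Matrix.head_cons, Matrix.cons_val_two, Matrix.tail_cons] at h0p h0m h1p h1m h2p h2m heq
  have hs : t 0 ^ 2 + t 1 ^ 2 + t 2 ^ 2 ≤ 0 := by
    ring_nf at h0p h0m h1p h1m h2p h2m heq
    linarith
  have e0 : t 0 = 0 := by nlinarith [sq_nonneg (t 1), sq_nonneg (t 2), sq_nonneg (t 0), hs]
  have e1 : t 1 = 0 := by nlinarith [sq_nonneg (t 1), sq_nonneg (t 2), sq_nonneg (t 0)]
  have e2 : t 2 = 0 := by nlinarith [sq_nonneg (t 1), sq_nonneg (t 2), sq_nonneg (t 0)]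
  constructor
  · intro i; fin_cases i
    · exact e0
    · exact e1
    · exact e2
  · intro i; fin_cases i
    · show D 0 ^ 2 = 1; nlinarith
    · show D 1 ^ 2 = 1; nlinarith
    · show D 2 ^ 2 = 1; nlinarith
end

section
/- Let f be a bounded real random variable with finite variance. Then Prob(|f − E[f]| > √(Var[f]/2)) ≥ Var[f] / (8·sup|f|²). -/
open MeasureTheory

/-- Let `f` be a bounded real random variable with finite variance.  Then
`Prob(|f − E[f]| > √(Var[f]/2)) ≥ Var[f] / (8 sup|f|²)`. -/
theorem stmt_3 {Ω : Type*} [MeasurableSpace Ω] (μ : Measure Ω)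
    [IsProbabilityMeasure μ] (f : Ω → ℝ) (hf : Measurable f)
    (M : ℝ) (hb : ∀ ω, |f ω| ≤ M) :
    ProbabilityTheory.variance f μ / (8 * M ^ 2) ≤
      (μ {ω | Real.sqrt (ProbabilityTheory.variance f μ / 2) <
        |f ω - ∫ x, f x ∂μ|}).toReal := by
  have hΩ : Nonempty Ω := by
    by_contra h
    have h1 := measure_univ (μ := μ)
    rw [Set.univ_eq_empty_iff.mpr (not_nonempty_iff.mp h)] at h1
    simp at h1
  have hM : 0 ≤ M := le_trans (abs_nonneg _) (hb (Classical.arbitrary Ω))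
  set m := ∫ x, f x ∂μ with hm
  set V := ProbabilityTheory.variance f μ with hV
  set A := {ω | Real.sqrt (V / 2) < |f ω - m|} with hA
  have hVnn : 0 ≤ V := ProbabilityTheory.variance_nonneg f μ
  have hf2 : MemLp f 2 μ :=
    MemLp.of_bound hf.aestronglyMeasurable M (Filter.Eventually.of_forall hb)
  have hmem : MemLp (fun ω => f ω - m) 2 μ := hf2.sub (memLp_const m)
  have hVeq : V = ∫ ω, (f ω - m) ^ 2 ∂μ := ProbabilityTheory.variance_eq_integral hf.aemeasurable
  have hmM : |m| ≤ M := by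
    have := norm_integral_le_of_norm_le_const (μ := μ) (f := f) (C := M)
      (Filter.Eventually.of_forall fun ω => hb ω)
    simpa using this
  have hAm : MeasurableSet A := by
    apply measurableSet_lt measurable_const
    exact (hf.sub measurable_const).abs
  have hgint : Integrable (fun ω => (f ω - m) ^ 2) μ := by
    have := hmem.integrable_sq
    simpa [Pi.pow_apply] using this
  have hbound : ∀ ω, (f ω - m) ^ 2 ≤ V / 2 + (4 * M ^ 2) * A.indicator (fun _ => (1:ℝ)) ω := by
    intro ω
    by_cases hω : ω ∈ A
    · rw [Set.indicator_of_mem hω]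
      have h1 : |f ω - m| ≤ 2 * M := by
        calc |f ω - m| ≤ |f ω| + |m| := abs_sub _ _
          _ ≤ M + M := add_le_add (hb ω) hmM
          _ = 2 * M := by ring
      have h2 : (f ω - m) ^ 2 ≤ (2 * M) ^ 2 := by
        rw [← sq_abs]
        exact pow_le_pow_left₀ (abs_nonneg _) h1 2
      nlinarith
    · rw [Set.indicator_of_notMem hω, mul_zero, add_zero]
      have h1 : |f ω - m| ≤ Real.sqrt (V / 2) := le_of_not_gt hω
      have h2 : (f ω - m) ^ 2 ≤ Real.sqrt (V / 2) ^ 2 := by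
        rw [← sq_abs]
        exact pow_le_pow_left₀ (abs_nonneg _) h1 2
      rwa [Real.sq_sqrt (by linarith)] at h2
  have hind : Integrable (fun ω => V / 2 + (4 * M ^ 2) * A.indicator (fun _ => (1:ℝ)) ω) μ := by
    apply (integrable_const _).add
    exact ((integrable_indicator_iff hAm).mpr (integrableOn_const (measure_lt_top μ A).ne)).const_mul _
  have hkey : V ≤ V / 2 + (4 * M ^ 2) * (μ A).toReal := by
    calc V = ∫ ω, (f ω - m) ^ 2 ∂μ := hVeq
      _ ≤ ∫ ω, (V / 2 + (4 * M ^ 2) * A.indicator (fun _ => (1:ℝ)) ω) ∂μ :=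
          integral_mono hgint hind hbound
      _ = V / 2 + (4 * M ^ 2) * (μ A).toReal := by
          rw [integral_add (integrable_const _)
            (((integrable_indicator_iff hAm).mpr (integrableOn_const (measure_lt_top μ A).ne)).const_mul _),
            integral_const, integral_const_mul, integral_indicator hAm]
          simp [Measure.real]
  rcases eq_or_lt_of_le hM with hM0 | hM0
  · have : V = 0 := by
      have : ∀ ω, f ω = 0 := fun ω => abs_eq_zero.mp (le_antisymm (hM0 ▸ hb ω) (abs_nonneg _))
      rw [hVeq]
      have hm0 : m = 0 := by simp [hm, this]
      simp [this, hm0]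
    rw [this]
    simp [ENNReal.toReal_nonneg]
  · rw [div_le_iff₀ (by positivity)]
    nlinarith [hkey]
end

section
/- Let ρ be an n-qubit density matrix and suppose that for every Pauli string P, (Tr(Pρ))² ≥ s^{|P|} for some s ∈ [0,1], where |P| is the Pauli weight. Then Tr(ρ²) ≥ ((1 + 3s)/2)ⁿ. -/
open scoped ComplexOrder

/-- The four single-qubit Pauli matrices `I, X, Y, Z`. -/
noncomputable def pauli : Fin 4 → Matrix (Fin 2) (Fin 2) ℂ :=
  ![1, !![0, 1; 1, 0], !![0, -Complex.I; Complex.I, 0], !![1, 0; 0, -1]]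

/-- The `n`-qubit Pauli string `⊗ᵢ pauli (s i)`. -/
noncomputable def pauliString {n : ℕ} (s : Fin n → Fin 4) :
    Matrix (Fin n → Fin 2) (Fin n → Fin 2) ℂ :=
  Matrix.of fun x y => ∏ i, pauli (s i) (x i) (y i)

/-- The Pauli weight: the number of non-identity tensor factors. -/
def pauliWeight {n : ℕ} (s : Fin n → Fin 4) : ℕ :=
  (Finset.univ.filter fun i => s i ≠ 0).card


lemma pauli_conj (k : Fin 4) (a b : Fin 2) :
    (starRingEnd ℂ) (pauli k a b) = pauli k b a := by
  fin_cases k <;> fin_cases a <;> fin_cases b <;>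
    simp [pauli, Matrix.one_apply]

lemma pauli_sum (a b c d : Fin 2) :
    ∑ k : Fin 4, pauli k a b * pauli k c d =
      if a = d ∧ b = c then (2 : ℂ) else 0 := by
  fin_cases a <;> fin_cases b <;> fin_cases c <;> fin_cases d <;>
    simp [pauli, Fin.sum_univ_four, Matrix.one_apply, Complex.I_mul_I] <;> ring_nf <;>
    simp [Complex.I_sq]

lemma pauliString_sum {n : ℕ} (x y z w : Fin n → Fin 2) :
    ∑ P : Fin n → Fin 4, pauliString P x y * pauliString P z w =
      if x = w ∧ y = z then (2 : ℂ) ^ n else 0 := by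
  have : ∀ P : Fin n → Fin 4, pauliString P x y * pauliString P z w =
      ∏ i, (pauli (P i) (x i) (y i) * pauli (P i) (z i) (w i)) := by
    intro P
    simp [pauliString, Finset.prod_mul_distrib]
  simp_rw [this]
  rw [← Fintype.prod_sum (fun i (k : Fin 4) => pauli k (x i) (y i) * pauli k (z i) (w i))]
  simp_rw [pauli_sum]
  by_cases hxw : x = w ∧ y = z
  · simp [hxw.1, hxw.2]
  · rw [if_neg hxw]
    rw [not_and_or] at hxw
    rcases hxw with hx | hy
    · obtain ⟨i, hi⟩ := Function.ne_iff.1 hx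
      exact Finset.prod_eq_zero (Finset.mem_univ i) (by simp [hi])
    · obtain ⟨i, hi⟩ := Function.ne_iff.1 hy
      exact Finset.prod_eq_zero (Finset.mem_univ i) (by simp [hi])

lemma key {n : ℕ} (ρ : Matrix (Fin n → Fin 2) (Fin n → Fin 2) ℂ) :
    ∑ P : Fin n → Fin 4, ((pauliString P * ρ).trace) ^ 2 =
      2 ^ n * (ρ * ρ).trace := by
  have tr_eq : ∀ P : Fin n → Fin 4, (pauliString P * ρ).trace =
      ∑ p : (Fin n → Fin 2) × (Fin n → Fin 2), pauliString P p.1 p.2 * ρ p.2 p.1 := by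
    intro P
    rw [Fintype.sum_prod_type]
    simp [Matrix.trace, Matrix.diag, Matrix.mul_apply]
  simp_rw [tr_eq, sq, Finset.sum_mul_sum]
  rw [Finset.sum_comm]
  have : ∀ p : (Fin n → Fin 2) × (Fin n → Fin 2),
      ∑ P : Fin n → Fin 4, ∑ q : (Fin n → Fin 2) × (Fin n → Fin 2),
        pauliString P p.1 p.2 * ρ p.2 p.1 * (pauliString P q.1 q.2 * ρ q.2 q.1) =
      2 ^ n * (ρ p.2 p.1 * ρ p.1 p.2) := by
    intro p
    rw [Finset.sum_comm]
    have : ∀ q : (Fin n → Fin 2) × (Fin n → Fin 2),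
        ∑ P : Fin n → Fin 4,
          pauliString P p.1 p.2 * ρ p.2 p.1 * (pauliString P q.1 q.2 * ρ q.2 q.1) =
        (if p.1 = q.2 ∧ p.2 = q.1 then (2:ℂ)^n else 0) * (ρ p.2 p.1 * ρ q.2 q.1) := by
      intro q
      rw [← pauliString_sum p.1 p.2 q.1 q.2, Finset.sum_mul]
      congr 1; ext P; ring
    simp_rw [this]
    have hcond : ∀ q : (Fin n → Fin 2) × (Fin n → Fin 2),
        (p.1 = q.2 ∧ p.2 = q.1) ↔ q = (p.2, p.1) := by
      intro q; constructor
      · rintro ⟨h1, h2⟩; exact Prod.ext h2.symm h1.symm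
      · rintro rfl; exact ⟨rfl, rfl⟩
    simp_rw [hcond, ite_mul, zero_mul]
    rw [Finset.sum_ite_eq' Finset.univ ((p.2, p.1)) ]
    simp
  simp_rw [this]
  rw [← Finset.mul_sum]
  congr 1
  rw [Fintype.sum_prod_type]
  simp [Matrix.trace, Matrix.diag, Matrix.mul_apply, mul_comm]

lemma pauliString_herm {n : ℕ} (P : Fin n → Fin 4) :
    (pauliString P).IsHermitian := by
  ext x y
  simp only [Matrix.conjTranspose_apply, pauliString, Matrix.of_apply]
  rw [show (star (∏ i, pauli (P i) (y i) (x i)) : ℂ) =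
      (starRingEnd ℂ) (∏ i, pauli (P i) (y i) (x i)) from rfl, map_prod]
  simp_rw [pauli_conj]

lemma trace_real {n : ℕ} (ρ : Matrix (Fin n → Fin 2) (Fin n → Fin 2) ℂ)
    (hρ : ρ.IsHermitian) (P : Fin n → Fin 4) :
    ((pauliString P * ρ).trace).im = 0 := by
  have : star ((pauliString P * ρ).trace) = (pauliString P * ρ).trace := by
    rw [← Matrix.trace_conjTranspose, Matrix.conjTranspose_mul,
      hρ.eq, (pauliString_herm P).eq, Matrix.trace_mul_comm]
  exact Complex.conj_eq_iff_im.1 this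

lemma count_sum {n : ℕ} (s : ℝ) :
    ∑ P : Fin n → Fin 4, s ^ pauliWeight P = (1 + 3 * s) ^ n := by
  have : ∀ P : Fin n → Fin 4, s ^ pauliWeight P =
      ∏ i, (if P i = 0 then (1:ℝ) else s) := by
    intro P
    rw [Finset.prod_ite, Finset.prod_const, Finset.prod_const, one_pow, one_mul,
      pauliWeight]
  simp_rw [this]
  rw [← Fintype.prod_sum (fun (_ : Fin n) (k : Fin 4) => if k = 0 then (1:ℝ) else s)]
  have h4 : ∑ k : Fin 4, (if k = 0 then (1:ℝ) else s) = 1 + 3 * s := by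
    rw [Fin.sum_univ_four]
    simp only [if_pos rfl, if_neg (by decide : (1:Fin 4) ≠ 0), if_neg (by decide : (2:Fin 4) ≠ 0),
      if_neg (by decide : (3:Fin 4) ≠ 0), if_true, eq_self_iff_true]
    ring
  simp_rw [h4, Finset.prod_const, Finset.card_univ, Fintype.card_fin]

/-- If every Pauli expectation of a density matrix `ρ` satisfies
`(Tr(Pρ))² ≥ s^{|P|}` for some `s ∈ [0,1]`, then
`Tr(ρ²) ≥ ((1 + 3s)/2)ⁿ`. -/
theorem stmt_14 {n : ℕ} (ρ : Matrix (Fin n → Fin 2) (Fin n → Fin 2) ℂ)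
    (hρ : ρ.PosSemidef) (hρ1 : ρ.trace = 1)
    (s : ℝ) (hs0 : 0 ≤ s) (hs1 : s ≤ 1)
    (h : ∀ P : Fin n → Fin 4,
      s ^ pauliWeight P ≤ ((pauliString P * ρ).trace.re) ^ 2) :
    ((1 + 3 * s) / 2) ^ n ≤ ((ρ * ρ).trace).re := by
  have hkey := congrArg Complex.re (key ρ)
  have him : ∀ P : Fin n → Fin 4, ((pauliString P * ρ).trace).im = 0 :=
    trace_real ρ hρ.1 
  have hsq : ∀ P : Fin n → Fin 4,
      ((((pauliString P * ρ).trace)) ^ 2).re = ((pauliString P * ρ).trace.re) ^ 2 := by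
    intro P
    rw [sq, Complex.mul_re, him, mul_zero, sub_zero, sq]
  have h2 : ((2:ℂ) ^ n * (ρ * ρ).trace).re = 2 ^ n * ((ρ * ρ).trace).re := by
    rw [show ((2:ℂ) ^ n) = (((2:ℝ) ^ n : ℝ) : ℂ) by push_cast; ring]
    rw [Complex.re_ofReal_mul]
  have hmain : ∑ P : Fin n → Fin 4, ((pauliString P * ρ).trace.re) ^ 2 =
      2 ^ n * ((ρ * ρ).trace).re := by
    rw [← h2, ← hkey, Complex.re_sum]
    exact Finset.sum_congr rfl fun P _ => (hsq P).symm
  have hge : (1 + 3 * s) ^ n ≤ 2 ^ n * ((ρ * ρ).trace).re := by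
    rw [← hmain, ← count_sum (n := n) s]
    exact Finset.sum_le_sum fun P _ => h P
  rw [div_pow, div_le_iff₀ (by positivity)]
  linarith [hge]
end
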